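/- Fix a positive integer n. Let λ ∈ H(1,n) be a regular diagram with λ₁ > n, and let μ be obtained from λ by deleting one box from the first row. Then F_λ(μ) = {λ}, i.e. λ is the unique element ν ∈ S(μ) with c̃_ν = c̃_λ. -/

import Mathlib

/-- A partition: a weakly decreasing sequence of naturals indexed from 1 (value at 0 unused, set to 0). -/
def IsPartition (P : ℕ → ℕ) : Prop :=
  P 0 = 0 ∧ ∀ i, 1 ≤ i → P (i + 1) ≤ P i

/-- `Q` is obtained from `P` by adding the box `(i,j)`. -/
def AddsBox (P Q : ℕ → ℕ) (i j : ℕ) : Prop :=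
  1 ≤ i ∧ j = P i + 1 ∧ Q = Function.update P i (P i + 1) ∧ IsPartition Q

/-- `Q` is obtained from `P` by removing the box `(i,j)`. -/
def RemovesBox (P Q : ℕ → ℕ) (i j : ℕ) : Prop :=
  1 ≤ i ∧ j = P i ∧ 1 ≤ P i ∧ Q = Function.update P i (P i - 1) ∧ IsPartition Q

/-- `Q ∈ S(P)`. -/
def InS (P Q : ℕ → ℕ) : Prop :=
  Q = P ∨ (∃ i j, AddsBox P Q i j) ∨ (∃ i j, RemovesBox P Q i j)

/-- `c̃_λ = Σ_{(i,j)∈λ} (2j − 2i + 1 − 2n)`. -/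
def ctilde (n : ℕ) (P : ℕ → ℕ) (N : ℕ) : ℤ :=
  ∑ i ∈ Finset.Icc 1 N, ∑ j ∈ Finset.Icc 1 (P i),
    (2 * (j : ℤ) - 2 * (i : ℤ) + 1 - 2 * (n : ℤ))

/-- `F_λ(μ) = {ν ∈ S(μ) : c̃_ν = c̃_λ}`. -/
def Fset (n N : ℕ) (L M : ℕ → ℕ) : Set (ℕ → ℕ) :=
  {Q | InS M Q ∧ ctilde n Q N = ctilde n L N}

/-- The conjugate partition. -/
def conj (P : ℕ → ℕ) (N : ℕ) (j : ℕ) : ℕ :=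
  ((Finset.Icc 1 N).filter (fun i => j ≤ P i)).card

/-!
Write `w(i,j) = 2j - 2i + 1 - 2n` for the weight of the box `(i,j)`, so that `c̃` is additive over
boxes. Since `λ` is `μ` plus the box `(1, λ₁)`, a diagram `ν ∈ S(μ)` has `c̃_ν = c̃_λ` exactly when
`ν = μ` and `w(1, λ₁) = 0`, which is impossible since weights are odd; or `ν` adds a box `(i,j)` to
`μ` with `w(i,j) = w(1, λ₁)`, which forces `i = 1` because rows `i ≥ 2` are at most `n` long; or `ν`
removes a corner `(i, μᵢ)` of `μ` with `w(i, μᵢ) + w(1, λ₁) = 0`. In the last case `λ'_{μᵢ} = i`,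
and the equation reads `λ₁ - n = λ'_{μᵢ} + n - μᵢ`, contradicting regularity.
-/

open Finset Function

def boxWeight (n i j : ℕ) : ℤ := 2 * (j : ℤ) - 2 * (i : ℤ) + 1 - 2 * (n : ℤ)

lemma boxWeight_ne_zero (n i j : ℕ) : boxWeight n i j ≠ 0 := by
  unfold boxWeight; omega

lemma ctilde_eq_sum_boxWeight (n N : ℕ) (P : ℕ → ℕ) :
    ctilde n P N = ∑ i ∈ Icc 1 N, ∑ j ∈ Icc 1 (P i), boxWeight n i j := rfl

lemma IsPartition.antitoneOn {P : ℕ → ℕ} (hP : IsPartition P) : AntitoneOn P {i | 1 ≤ i} :=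
  antitoneOn_nat_Ici_of_succ_le hP.2

lemma conj_eq_of_lt_of_le {P : ℕ → ℕ} (hP : IsPartition P) {N i v : ℕ} (hi : 1 ≤ i)
    (hiN : i ≤ N) (hlt : P (i + 1) < v) (hle : v ≤ P i) : conj P N v = i := by
  have hrows : (Icc 1 N).filter (fun r => v ≤ P r) = Icc 1 i := by
    ext r
    simp only [mem_filter, mem_Icc]
    constructor
    · rintro ⟨⟨hr, -⟩, hvr⟩
      refine ⟨hr, ?_⟩
      by_contra! hir
      have := hP.antitoneOn (show 1 ≤ i + 1 by omega) (show 1 ≤ r by omega) hir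
      omega
    · rintro ⟨hr, hri⟩
      exact ⟨⟨hr, hri.trans hiN⟩, hle.trans (hP.antitoneOn hr hi hri)⟩
  rw [conj, hrows, Nat.card_Icc, Nat.add_sub_cancel]

section Boxes

variable {P Q : ℕ → ℕ} {i j : ℕ}

lemma AddsBox.eq_update (h : AddsBox P Q i j) : Q = update P i (P i + 1) := h.2.2.1

lemma AddsBox.lt_pred (h : AddsBox P Q i j) (hi : 2 ≤ i) : P i < P (i - 1) := by
  obtain ⟨-, -, rfl, hQ⟩ := h
  have := hQ.2 (i - 1) (by omega)
  rwa [Nat.sub_add_cancel (by omega), update_self, update_of_ne (by omega)] at this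

lemma AddsBox.row_le {N : ℕ} (h : AddsBox P Q i j) (hN : ∀ r, N ≤ r → P r = 0) (hN1 : 1 ≤ N) :
    i ≤ N := by
  by_contra! hi
  have := h.lt_pred (by omega)
  rw [hN (i - 1) (by omega)] at this
  omega

lemma AddsBox.ctilde_eq (h : AddsBox P Q i j) (n : ℕ) {N : ℕ} (hiN : i ≤ N) :
    ctilde n Q N = ctilde n P N + boxWeight n i j := by
  obtain ⟨hi, rfl, rfl, -⟩ := h
  have hrow : ∀ r, ∑ k ∈ Icc 1 (update P i (P i + 1) r), boxWeight n r k =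
      ∑ k ∈ Icc 1 (P r), boxWeight n r k + if r = i then boxWeight n i (P i + 1) else 0 := by
    intro r
    rcases eq_or_ne r i with rfl | hr
    · simp [sum_Icc_succ_top]
    · simp [hr]
  rw [ctilde_eq_sum_boxWeight, sum_congr rfl fun r _ => hrow r, sum_add_distrib, sum_ite_eq',
    if_pos (mem_Icc.2 ⟨hi, hiN⟩), ctilde_eq_sum_boxWeight]

lemma RemovesBox.eq_update (h : RemovesBox P Q i j) : Q = update P i (P i - 1) := h.2.2.2.1

lemma RemovesBox.isPartition (h : RemovesBox P Q i j) : IsPartition Q := h.2.2.2.2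

lemma RemovesBox.apply_of_ne (h : RemovesBox P Q i j) {r : ℕ} (hr : r ≠ i) : Q r = P r := by
  rw [h.eq_update, update_of_ne hr]

lemma RemovesBox.row_lt {N : ℕ} (h : RemovesBox P Q i j) (hN : ∀ r, N ≤ r → P r = 0) : i < N := by
  by_contra! hi
  have := h.2.2.1
  rw [hN i hi] at this
  omega

lemma RemovesBox.le (h : RemovesBox P Q i j) (r : ℕ) : Q r ≤ P r := by
  rw [h.eq_update]
  rcases eq_or_ne r i with rfl | hr
  · simp
  · simp [hr]

lemma RemovesBox.succ_lt (h : RemovesBox P Q i j) : P (i + 1) < P i := by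
  obtain ⟨hi, -, hPi, rfl, hQ⟩ := h
  have := hQ.2 i hi
  rw [update_self, update_of_ne (by omega)] at this
  omega

lemma RemovesBox.addsBox (h : RemovesBox P Q i j) (hP : IsPartition P) : AddsBox Q P i j := by
  obtain ⟨hi, rfl, hPi, rfl, -⟩ := h
  refine ⟨hi, by simp; omega, ?_, hP⟩
  ext r
  rcases eq_or_ne r i with rfl | hr
  · simp; omega
  · simp [hr]

end Boxes

section FirstRowRemoval

variable {n N : ℕ} {P M Q : ℕ → ℕ} {i j : ℕ}

lemma AddsBox.row_eq_one_of_boxWeight_eq (hQ : AddsBox M Q i j) (hP : IsPartition P)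
    (hPH : P 2 ≤ n) (hP1 : n < P 1) (hM : RemovesBox P M 1 (P 1))
    (hw : boxWeight n i j = boxWeight n 1 (P 1)) : i = 1 := by
  obtain ⟨hi, rfl, -⟩ := hQ
  by_contra hi1
  have hMi : M i = P i := hM.apply_of_ne hi1
  have hPi : P i ≤ P 2 := hP.antitoneOn (show 1 ≤ 2 by omega) (show 1 ≤ i by omega) (by omega)
  unfold boxWeight at hw
  omega

lemma exists_irregular_of_removesBox (hQ : RemovesBox M Q i j) (hP : IsPartition P)
    (hPH : P 2 ≤ n) (hM : RemovesBox P M 1 (P 1)) (hiN : i ≤ N)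
    (hw : boxWeight n i j + boxWeight n 1 (P 1) = 0) :
    ∃ j, 1 ≤ j ∧ j ≤ n ∧ (P 1 : ℤ) - n = conj P N j + n - j := by
  have hconj : conj P N (M i) = i := by
    refine conj_eq_of_lt_of_le hP hQ.1 hiN ?_ (hM.le i)
    rw [← hM.apply_of_ne (show i + 1 ≠ 1 by have := hQ.1; omega)]
    exact hQ.succ_lt
  obtain ⟨hi, rfl, hMi, -⟩ := hQ
  refine ⟨M i, hMi, ?_, by rw [hconj]; unfold boxWeight at hw; omega⟩
  rcases eq_or_ne i 1 with rfl | hi1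
  · have hM1 : M 1 = P 1 - 1 := by rw [hM.eq_update, update_self]
    unfold boxWeight at hw
    omega
  · rw [hM.apply_of_ne hi1]
    exact (hP.antitoneOn (show 1 ≤ 2 by omega) (show 1 ≤ i by omega) (by omega)).trans hPH

end FirstRowRemoval

theorem Fset_regular_general (n : ℕ) (P : ℕ → ℕ) (hP : IsPartition P)
    (hPH : P 2 ≤ n) (hP1 : n < P 1)
    (N : ℕ) (hN : ∀ r, N ≤ r → P r = 0)
    (hreg : ¬ ∃ j, 1 ≤ j ∧ j ≤ n ∧
      (P 1 : ℤ) - (n : ℤ) = (conj P N j : ℤ) + (n : ℤ) - (j : ℤ))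
    (M : ℕ → ℕ) (hM : RemovesBox P M 1 (P 1)) :
    Fset n N P M = {P} := by
  have hN1 : 1 ≤ N := by
    by_contra!
    have := hN 1 (by omega)
    omega
  have hMN : ∀ r, N ≤ r → M r = 0 := fun r hr => Nat.le_zero.1 (hN r hr ▸ hM.le r)
  have hMP : AddsBox M P 1 (P 1) := hM.addsBox hP
  have hcP := hMP.ctilde_eq n hN1
  ext Q
  refine ⟨fun ⟨hQ, hcQ⟩ => ?_, fun hQ => ⟨Or.inr (Or.inl ⟨1, P 1, hQ ▸ hMP⟩), hQ ▸ rfl⟩⟩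
  rcases hQ with rfl | ⟨i, j, hQ⟩ | ⟨i, j, hQ⟩
  · exact absurd (by linarith) (boxWeight_ne_zero n 1 (P 1))
  · have hcQM := hQ.ctilde_eq n (hQ.row_le hMN hN1)
    obtain rfl : i = 1 := hQ.row_eq_one_of_boxWeight_eq hP hPH hP1 hM (by linarith)
    exact hQ.eq_update.trans hMP.eq_update.symm
  · have hiN : i ≤ N := (hQ.row_lt hMN).le
    have hcMQ := (hQ.addsBox hM.isPartition).ctilde_eq n hiN
    exact absurd (exists_irregular_of_removesBox hQ hP hPH hM hiN (by linarith)) hreg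

/-- If `λ ∈ H(1,n)` is regular with `λ₁ > n` and `μ` is obtained from `λ` by deleting one box
from the first row, then `F_λ(μ) = {λ}`. -/
theorem Fset_regular (n : ℕ) (hn : 1 ≤ n) (P : ℕ → ℕ) (hP : IsPartition P)
    (hPH : P 2 ≤ n) (hP1 : n < P 1)
    (N : ℕ) (hN : ∀ r, N ≤ r → P r = 0)
    (hreg : ¬ ∃ j, 1 ≤ j ∧ j ≤ n ∧
      (P 1 : ℤ) - (n : ℤ) = (conj P N j : ℤ) + (n : ℤ) - (j : ℤ))
    (M : ℕ → ℕ) (hM : RemovesBox P M 1 (P 1)) :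
    Fset n N P M = {P} :=
  Fset_regular_general n P hP hPH hP1 N hN hreg M hM
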